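/- For Re(ψ) < 0 and λ > 0, ∫₀^∞ e^{-λt} (∫₀^∞ e^{sψ} (2/√(4πt)) e^{-s²/(4t)} ds) dt = λ^{-1/2}/(λ^{1/2} − ψ). -/

import Mathlib

open Real MeasureTheory Set


lemma cexp_integrable {c : ℂ} (hc : c.re < 0) :
    IntegrableOn (fun s : ℝ => Complex.exp (c * s)) (Ioi 0) := by
  have h : IntegrableOn (fun s : ℝ => Real.exp (-(-c.re) * s)) (Ioi 0) :=
    exp_neg_integrableOn_Ioi 0 (by linarith)
  apply h.integrable.mono
  · exact (Complex.continuous_exp.comp (by continuity)).aestronglyMeasurable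
  · filter_upwards [ae_restrict_mem measurableSet_Ioi] with s hs
    simp only [Complex.norm_exp, norm_eq_abs, abs_exp]
    apply Real.exp_le_exp.2
    simp only [Complex.mul_re, Complex.ofReal_re, Complex.ofReal_im, mul_zero, sub_zero, neg_neg]
    nlinarith [le_of_lt (mem_Ioi.1 hs)]

lemma hasDerivAt_cexp_mul (c : ℂ) (x : ℝ) :
    HasDerivAt (fun s : ℝ => Complex.exp (c * s)) (c * Complex.exp (c * x)) x := by
  have h1 : HasDerivAt (fun s : ℝ => c * (s : ℂ)) c x := by
    simpa using (Complex.ofRealCLM.hasDerivAt (x := x)).const_mul c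
  simpa [mul_comm] using h1.cexp

lemma integral_cexp_Ioi {c : ℂ} (hc : c.re < 0) :
    ∫ s in Ioi (0:ℝ), Complex.exp (c * s) = -c⁻¹ := by
  have hc0 : c ≠ 0 := fun h => by simp [h] at hc
  have := integral_Ioi_of_hasDerivAt_of_tendsto (f := fun s : ℝ => c⁻¹ * Complex.exp (c * s))
    (f' := fun s : ℝ => Complex.exp (c * s)) (a := 0) (m := 0)
    ?_ ?_ (cexp_integrable hc) ?_
  · rw [this]; simp
  · exact (continuous_const.mul (Complex.continuous_exp.comp (by continuity))).continuousWithinAt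
  · intro x _
    have h := (hasDerivAt_cexp_mul c x).const_mul c⁻¹
    simpa [← mul_assoc, inv_mul_cancel₀ hc0] using h
  · rw [show (0:ℂ) = c⁻¹ * 0 by ring]
    apply Filter.Tendsto.const_mul
    rw [tendsto_zero_iff_norm_tendsto_zero]
    have : ∀ s : ℝ, ‖Complex.exp (c * s)‖ = Real.exp (c.re * s) := by
      intro s; simp [Complex.norm_exp, Complex.mul_re]
    simp_rw [this]
    have : Filter.Tendsto (fun s : ℝ => c.re * s) Filter.atTop Filter.atBot :=
      Filter.Tendsto.const_mul_atTop_of_neg hc Filter.tendsto_id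
    exact Real.tendsto_exp_atBot.comp this

section Glasser
variable {a b : ℝ} (ha : 0 < a) (hb : 0 < b)

lemma glasser_deriv (ha : 0 < a) (hb : 0 < b) :
    ∀ u ∈ Ioi (0:ℝ), HasDerivWithinAt (fun u => Real.sqrt a * u - b/u)
      (Real.sqrt a + b/u^2) (Ioi 0) u := by
  intro u hu
  have hu0 : u ≠ 0 := ne_of_gt hu
  have h1 : HasDerivAt (fun u : ℝ => Real.sqrt a * u - b/u) (Real.sqrt a + b/u^2) u := by
    have h0 := ((hasDerivAt_id u).const_mul (Real.sqrt a)).sub ((hasDerivAt_inv hu0).const_mul b)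
    have he : (fun u:ℝ => Real.sqrt a * u - b/u) = fun y => Real.sqrt a * id y - b * y⁻¹ := by
      funext y; simp [div_eq_mul_inv]
    rw [he]
    refine h0.congr_deriv ?_
    ring
  exact h1.hasDerivWithinAt

lemma glasser_injOn (ha : 0 < a) (hb : 0 < b) :
    InjOn (fun u => Real.sqrt a * u - b/u) (Ioi (0:ℝ)) := by
  have hmono : StrictMonoOn (fun u => Real.sqrt a * u - b/u) (Ioi (0:ℝ)) := by
    intro u hu v hv huv
    have hu0 : (0:ℝ) < u := hu
    have hv0 : (0:ℝ) < v := hv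
    have h1 : Real.sqrt a * u ≤ Real.sqrt a * v :=
      mul_le_mul_of_nonneg_left huv.le (Real.sqrt_nonneg a)
    have h2 : b/v < b/u := div_lt_div_of_pos_left hb hu0 huv
    simp only; linarith
  exact hmono.injOn

lemma glasser_surj (ha : 0 < a) (hb : 0 < b) :
    (fun u => Real.sqrt a * u - b/u) '' (Ioi (0:ℝ)) = univ := by
  apply eq_univ_of_forall
  intro v
  set r := Real.sqrt a with hr
  have hr0 : 0 < r := Real.sqrt_pos.2 ha
  set u := (v + Real.sqrt (v^2 + 4*r*b))/(2*r) with hu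
  have hs : Real.sqrt (v^2+4*r*b) ^ 2 = v^2+4*r*b := Real.sq_sqrt (by positivity)
  have hsv : |v| < Real.sqrt (v^2+4*r*b) := by
    have : Real.sqrt (v^2) < Real.sqrt (v^2+4*r*b) := by
      apply Real.sqrt_lt_sqrt (by positivity); nlinarith
    simpa [Real.sqrt_sq_eq_abs] using this
  have hu0 : 0 < u := by
    rw [hu]
    apply div_pos _ (by linarith)
    have := neg_abs_le v
    linarith
  refine ⟨u, hu0, ?_⟩
  have key : r * u^2 = u*v + b := by
    have h2 : 2*r*u - v = Real.sqrt (v^2+4*r*b) := by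
      rw [hu]; field_simp; ring
    have h4 : (2*r*u-v)^2 = v^2+4*r*b := by rw [h2]; exact hs
    nlinarith [h4, hr0, mul_pos hr0 hu0]
  simp only
  rw [eq_comm, ← sub_eq_zero]
  field_simp
  nlinarith [key]

lemma glasser_int (ha : 0 < a) (hb : 0 < b) :
    IntegrableOn (fun u => (Real.sqrt a + b/u^2) *
      Real.exp (-(Real.sqrt a * u - b/u)^2)) (Ioi (0:ℝ)) := by
  have h := (integrableOn_image_iff_integrableOn_abs_deriv_smul measurableSet_Ioi
    (glasser_deriv ha hb) (glasser_injOn ha hb) (fun v => Real.exp (-v^2))).1 ?_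
  · apply h.congr_fun ?_ measurableSet_Ioi
    intro u hu
    have hu0 : (0:ℝ) < u := hu
    simp only [smul_eq_mul]
    rw [abs_of_pos (by positivity)]
  · rw [glasser_surj ha hb]
    rw [integrableOn_univ]
    simpa using integrable_exp_neg_mul_sq (one_pos)

lemma glasser_pi (ha : 0 < a) (hb : 0 < b) :
    ∫ u in Ioi (0:ℝ), (Real.sqrt a + b/u^2) * Real.exp (-(Real.sqrt a * u - b/u)^2)
      = Real.sqrt π := by
  have h := integral_image_eq_integral_abs_deriv_smul measurableSet_Ioi
    (glasser_deriv ha hb) (glasser_injOn ha hb) (fun v => Real.exp (-v^2))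
  rw [glasser_surj ha hb] at h
  have hg : ∫ x in (univ : Set ℝ), Real.exp (-x^2) = Real.sqrt π := by
    rw [Measure.restrict_univ]
    simpa using integral_gaussian 1
  rw [hg] at h
  rw [h]
  apply setIntegral_congr_fun measurableSet_Ioi
  intro u hu
  have hu0 : (0:ℝ) < u := hu
  simp only [smul_eq_mul]
  rw [abs_of_pos (by positivity)]

lemma glasser_inv_subst (ha : 0 < a) (hb : 0 < b) :
    ∫ u in Ioi (0:ℝ), Real.exp (-(Real.sqrt a * u - b/u)^2)
      = ∫ u in Ioi (0:ℝ), (b/Real.sqrt a)/u^2 * Real.exp (-(Real.sqrt a * u - b/u)^2) := by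
  set r := Real.sqrt a with hr
  have hr0 : 0 < r := Real.sqrt_pos.2 ha
  set c := b/r with hc
  have hc0 : 0 < c := div_pos hb hr0
  have himg : (fun u : ℝ => c/u) '' (Ioi 0) = Ioi 0 := by
    apply Subset.antisymm
    · rintro _ ⟨u, hu, rfl⟩; exact div_pos hc0 hu
    · intro v hv
      exact ⟨c/v, div_pos hc0 hv, by field_simp⟩
  have hderiv : ∀ u ∈ Ioi (0:ℝ), HasDerivWithinAt (fun u : ℝ => c/u) (-(c/u^2)) (Ioi 0) u := by
    intro u hu
    have hu0 : u ≠ 0 := ne_of_gt hu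
    have h0 := (hasDerivAt_inv hu0).const_mul c
    have he : (fun u:ℝ => c/u) = fun y => c * y⁻¹ := by funext y; simp [div_eq_mul_inv]
    rw [he]
    refine HasDerivAt.hasDerivWithinAt ?_
    refine h0.congr_deriv ?_
    ring
  have hinj : InjOn (fun u : ℝ => c/u) (Ioi 0) := by
    intro u hu v hv huv
    have hu0 : (0:ℝ) < u := hu
    have hv0 : (0:ℝ) < v := hv
    field_simp at huv
    linarith [huv]
  have h := integral_image_eq_integral_abs_deriv_smul measurableSet_Ioi
    hderiv hinj (fun v => Real.exp (-(r * v - b/v)^2))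
  rw [himg] at h
  rw [h]
  apply setIntegral_congr_fun measurableSet_Ioi
  intro u hu
  have hu0 : (0:ℝ) < u := hu
  simp only [smul_eq_mul]
  rw [abs_neg, abs_of_pos (by positivity)]
  congr 2
  have h1 : r * (c/u) - b/(c/u) = -(r*u - b/u) := by
    rw [hc]; field_simp; ring
  rw [h1]
  ring

lemma glasser_contOn (a b : ℝ) :
    ContinuousOn (fun u : ℝ => Real.exp (-(Real.sqrt a * u - b/u)^2)) (Ioi 0) := by
  apply ContinuousOn.rexp
  apply ContinuousOn.neg
  apply ContinuousOn.pow
  exact (continuousOn_const.mul continuousOn_id).sub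
    (continuousOn_const.div continuousOn_id (fun x hx => ne_of_gt hx))

lemma glasser_exp_sq_integrable (ha : 0 < a) (hb : 0 < b) :
    IntegrableOn (fun u => Real.exp (-(Real.sqrt a * u - b/u)^2)) (Ioi (0:ℝ)) ∧
    IntegrableOn (fun u => (b/Real.sqrt a)/u^2 * Real.exp (-(Real.sqrt a * u - b/u)^2)) (Ioi (0:ℝ)) := by
  have hr0 : 0 < Real.sqrt a := Real.sqrt_pos.2 ha
  have hG := (glasser_int ha hb).const_mul (1/Real.sqrt a)
  have hbd : ∀ u ∈ Ioi (0:ℝ), ∀ k : ℝ, k ≤ 1/Real.sqrt a * (Real.sqrt a + b/u^2) →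
      k * Real.exp (-(Real.sqrt a * u - b/u)^2)
        ≤ 1/Real.sqrt a * ((Real.sqrt a + b/u^2) * Real.exp (-(Real.sqrt a * u - b/u)^2)) := by
    intro u hu k hk
    have := mul_le_mul_of_nonneg_right hk (Real.exp_nonneg (-(Real.sqrt a * u - b/u)^2))
    calc k * Real.exp (-(Real.sqrt a * u - b/u)^2)
        ≤ (1/Real.sqrt a * (Real.sqrt a + b/u^2)) * Real.exp (-(Real.sqrt a * u - b/u)^2) := this
      _ = 1/Real.sqrt a * ((Real.sqrt a + b/u^2) * Real.exp (-(Real.sqrt a * u - b/u)^2)) := by ring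
  constructor
  · apply Integrable.mono' hG
    · exact (glasser_contOn a b).aestronglyMeasurable measurableSet_Ioi
    · filter_upwards [ae_restrict_mem measurableSet_Ioi] with u hu
      have hu0 : (0:ℝ) < u := hu
      rw [Real.norm_eq_abs, abs_of_pos (Real.exp_pos _)]
      have h1 : (1:ℝ) ≤ 1/Real.sqrt a * (Real.sqrt a + b/u^2) := by
        rw [one_div, inv_mul_eq_div, le_div_iff₀ hr0, one_mul]
        have : 0 < b/u^2 := by positivity
        linarith
      simpa using hbd u hu 1 h1
  · apply Integrable.mono' hG
    · apply ContinuousOn.aestronglyMeasurable _ measurableSet_Ioi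
      exact (continuousOn_const.div (continuousOn_pow 2)
        (fun x hx => ne_of_gt (pow_pos hx 2))).mul (glasser_contOn a b)
    · filter_upwards [ae_restrict_mem measurableSet_Ioi] with u hu
      have hu0 : (0:ℝ) < u := hu
      rw [Real.norm_eq_abs, abs_of_pos (by positivity)]
      have h1 : (b/Real.sqrt a)/u^2 ≤ 1/Real.sqrt a * (Real.sqrt a + b/u^2) := by
        have he : 1/Real.sqrt a * (Real.sqrt a + b/u^2) = 1 + (b/Real.sqrt a)/u^2 := by
          field_simp
        rw [he]; nlinarith
      exact hbd u hu _ h1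

lemma glasser_half (ha : 0 < a) (hb : 0 < b) :
    ∫ u in Ioi (0:ℝ), Real.exp (-(Real.sqrt a * u - b/u)^2)
      = Real.sqrt π / (2 * Real.sqrt a) := by
  have hr0 : 0 < Real.sqrt a := Real.sqrt_pos.2 ha
  obtain ⟨h1, h2⟩ := glasser_exp_sq_integrable ha hb
  have hJ2 := (glasser_inv_subst ha hb).symm
  have hsplit : Real.sqrt π
      = Real.sqrt a * (∫ u in Ioi (0:ℝ), Real.exp (-(Real.sqrt a * u - b/u)^2))
        + Real.sqrt a * (∫ u in Ioi (0:ℝ), Real.exp (-(Real.sqrt a * u - b/u)^2)) := by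
    rw [← glasser_pi ha hb]
    nth_rewrite 1 [← hJ2]
    rw [← integral_const_mul, ← integral_const_mul, ← integral_add (h2.const_mul _) (h1.const_mul _)]
    apply setIntegral_congr_fun measurableSet_Ioi
    intro u hu
    have hu0 : (0:ℝ) < u := hu
    simp only
    have hc : Real.sqrt a * ((b/Real.sqrt a)/u^2) = b/u^2 := by field_simp
    rw [show Real.sqrt a * ((b/Real.sqrt a)/u^2 * Real.exp (-(Real.sqrt a * u - b/u)^2))
        = (Real.sqrt a * ((b/Real.sqrt a)/u^2)) * Real.exp (-(Real.sqrt a * u - b/u)^2) by ring,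
      hc]
    ring
  rw [eq_div_iff (by positivity)]
  linarith

lemma glasser (ha : 0 < a) (hb : 0 < b) :
    ∫ u in Ioi (0:ℝ), Real.exp (-(a*u^2) - b^2/u^2)
      = Real.sqrt π / (2 * Real.sqrt a) * Real.exp (-(2*b*Real.sqrt a)) := by
  have hr : Real.sqrt a ^ 2 = a := Real.sq_sqrt ha.le
  have h : ∀ u ∈ Ioi (0:ℝ), Real.exp (-(a*u^2) - b^2/u^2)
      = Real.exp (-(Real.sqrt a * u - b/u)^2) * Real.exp (-(2*b*Real.sqrt a)) := by
    intro u hu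
    have hu0 : (0:ℝ) < u := hu
    rw [← Real.exp_add]
    congr 1
    field_simp
    linear_combination (u^2*u^2) * hr
  rw [setIntegral_congr_fun measurableSet_Ioi h, integral_mul_const, glasser_half ha hb]

end Glasser



lemma heat_laplace {l s : ℝ} (hl : 0 < l) (hs : 0 < s) :
    ∫ t in Ioi (0:ℝ), Real.exp (-l*t) * (2/Real.sqrt (4*π*t) * Real.exp (-s^2/(4*t)))
      = Real.exp (-(s*Real.sqrt l)) / Real.sqrt l := by
  have hπ : (0:ℝ) < π := Real.pi_pos
  have himg : (fun u : ℝ => u^2) '' (Ioi 0) = Ioi 0 := by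
    apply Subset.antisymm
    · rintro _ ⟨u, hu, rfl⟩; exact pow_pos (mem_Ioi.1 hu) 2
    · intro v hv
      exact ⟨Real.sqrt v, Real.sqrt_pos.2 hv, Real.sq_sqrt (le_of_lt hv)⟩
  have hderiv : ∀ u ∈ Ioi (0:ℝ), HasDerivWithinAt (fun u : ℝ => u^2) (2*u) (Ioi 0) u := by
    intro u hu
    simpa [mul_comm] using (hasDerivAt_pow 2 u).hasDerivWithinAt
  have hinj : InjOn (fun u : ℝ => u^2) (Ioi 0) := by
    intro u hu v hv h
    have h1 : |u| = |v| := by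
      rw [← Real.sqrt_sq_eq_abs, ← Real.sqrt_sq_eq_abs]
      simp only at h
      rw [h]
    rwa [abs_of_pos hu, abs_of_pos hv] at h1
  have h := integral_image_eq_integral_abs_deriv_smul measurableSet_Ioi hderiv hinj
    (fun t => Real.exp (-l*t) * (2/Real.sqrt (4*π*t) * Real.exp (-s^2/(4*t))))
  rw [himg] at h
  rw [h]
  have hcong : ∀ u ∈ Ioi (0:ℝ),
      |2*u| • (Real.exp (-l*u^2) * (2/Real.sqrt (4*π*u^2) * Real.exp (-s^2/(4*u^2))))
      = (2/Real.sqrt π) * Real.exp (-(l*u^2) - (s/2)^2/u^2) := by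
    intro u hu
    have hu0 : (0:ℝ) < u := hu
    have hsq : Real.sqrt (4*π*u^2) = 2*Real.sqrt π*u := by
      rw [show (4*π*u^2 : ℝ) = (2*Real.sqrt π*u)^2 by
        rw [mul_pow, mul_pow]; rw [Real.sq_sqrt hπ.le]; ring]
      exact Real.sqrt_sq (by positivity)
    rw [smul_eq_mul, abs_of_pos (by positivity), hsq]
    rw [show -(l*u^2) - (s/2)^2/u^2 = (-l*u^2) + (-s^2/(4*u^2)) by field_simp; ring]
    rw [Real.exp_add]
    have hs0 : Real.sqrt π ≠ 0 := by positivity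
    field_simp
  rw [setIntegral_congr_fun measurableSet_Ioi hcong, integral_const_mul,
    glasser hl (by positivity : (0:ℝ) < s/2)]
  have h2 : 2*(s/2)*Real.sqrt l = s*Real.sqrt l := by ring
  rw [h2]
  have hs0 : Real.sqrt π ≠ 0 := by positivity
  have hl0 : Real.sqrt l ≠ 0 := by positivity
  field_simp


section main
variable (ψ : ℂ) (l : ℝ)

noncomputable def G : ℝ × ℝ → ℂ := fun p =>
  (Real.exp (-l * p.1) : ℂ) * (Complex.exp ((p.2 : ℂ) * ψ) *
    ((2 / Real.sqrt (4 * π * p.1) * Real.exp (-p.2 ^ 2 / (4 * p.1)) : ℝ) : ℂ))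

lemma G_norm {t s : ℝ} (ht : 0 < t) (hs : 0 < s) :
    ‖G ψ l (t, s)‖ = Real.exp (-l*t) * Real.exp (s * ψ.re)
      * (2 / Real.sqrt (4 * π * t) * Real.exp (-s ^ 2 / (4 * t))) := by
  have hq : (0:ℝ) ≤ 2 / Real.sqrt (4 * π * t) * Real.exp (-s ^ 2 / (4 * t)) := by positivity
  have h1 : ‖((Real.exp (-l*t) : ℝ) : ℂ)‖ = Real.exp (-l*t) := by
    rw [Complex.norm_real, Real.norm_eq_abs, abs_of_pos (Real.exp_pos _)]
  have h2 : ‖Complex.exp ((s:ℂ)*ψ)‖ = Real.exp (s*ψ.re) := by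
    rw [Complex.norm_exp]
    congr 1
    simp [Complex.mul_re]
  have h3 : ‖((2 / Real.sqrt (4 * π * t) * Real.exp (-s ^ 2 / (4 * t)) : ℝ) : ℂ)‖
      = 2 / Real.sqrt (4 * π * t) * Real.exp (-s ^ 2 / (4 * t)) := by
    rw [Complex.norm_real, Real.norm_eq_abs, abs_of_nonneg hq]
  simp only [G, norm_mul, h1, h2, h3]
  ring

lemma G_aesm (hl : 0 < l) :  AEStronglyMeasurable (G ψ l)
    ((volume.restrict (Ioi 0)).prod (volume.restrict (Ioi (0:ℝ)))) := by
  rw [Measure.prod_restrict]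
  apply ContinuousOn.aestronglyMeasurable _ (measurableSet_Ioi.prod measurableSet_Ioi)
  have c1 : Continuous fun p : ℝ × ℝ => ((Real.exp (-l * p.1) : ℝ) : ℂ) :=
    Complex.continuous_ofReal.comp (Real.continuous_exp.comp (continuous_const.mul continuous_fst))
  have c2 : Continuous fun p : ℝ × ℝ => Complex.exp ((p.2 : ℂ) * ψ) :=
    Complex.continuous_exp.comp ((Complex.continuous_ofReal.comp continuous_snd).mul
      continuous_const)
  have c3 : ContinuousOn (fun p : ℝ × ℝ => 2 / Real.sqrt (4 * π * p.1))
      (Ioi 0 ×ˢ Ioi 0) := by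
    apply continuousOn_const.div ((continuous_const.mul continuous_fst).sqrt.continuousOn)
    rintro ⟨t, s⟩ ⟨ht, -⟩
    have ht' : (0:ℝ) < t := ht
    have h4 : (0:ℝ) < 4*π*t := by positivity
    positivity
  have c4 : ContinuousOn (fun p : ℝ × ℝ => Real.exp (-p.2 ^ 2 / (4 * p.1)))
      (Ioi 0 ×ˢ Ioi 0) := by
    apply ContinuousOn.rexp
    apply ContinuousOn.div ((continuous_snd.pow 2).neg.continuousOn)
      ((continuous_const.mul continuous_fst).continuousOn)
    rintro ⟨t, s⟩ ⟨ht, -⟩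
    have ht' : (0:ℝ) < t := ht
    show (4:ℝ) * t ≠ 0
    positivity
  exact c1.continuousOn.mul (c2.continuousOn.mul
    (Complex.continuous_ofReal.comp_continuousOn (c3.mul c4)))

lemma gauss_slice {t : ℝ} (ht : 0 < t) :
    IntegrableOn (fun s : ℝ => 2 / Real.sqrt (4 * π * t) * Real.exp (-s ^ 2 / (4 * t))) (Ioi 0) := by
  have h4t : (0:ℝ) < 1/(4*t) := by positivity
  have h1 : IntegrableOn (fun s : ℝ => Real.exp (-(1/(4*t)) * s^2)) (Ioi 0) :=
    (integrable_exp_neg_mul_sq h4t).integrableOn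
  have h : IntegrableOn (fun s : ℝ => 2 / Real.sqrt (4 * π * t)
      * Real.exp (-(1/(4*t)) * s^2)) (Ioi 0) := h1.const_mul _
  have he : ∀ s : ℝ, -(1/(4*t)) * s^2 = -s^2/(4*t) := fun s => by ring
  simp_rw [he] at h
  exact h

lemma gauss_slice_integral {t : ℝ} (ht : 0 < t) :
    ∫ s in Ioi (0:ℝ), 2 / Real.sqrt (4 * π * t) * Real.exp (-s ^ 2 / (4 * t)) = 1 := by
  have h4t : (0:ℝ) < 1/(4*t) := by positivity
  have he : ∀ s : ℝ, -s^2/(4*t) = -(1/(4*t)) * s^2 := fun s => by ring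
  simp_rw [he]
  rw [integral_const_mul, integral_gaussian_Ioi]
  have h2 : π / (1/(4*t)) = 4*π*t := by field_simp
  rw [h2]
  have h0 : Real.sqrt (4*π*t) ≠ 0 := by
    have : (0:ℝ) < 4*π*t := by positivity
    positivity
  field_simp

lemma G_slice_integrable (hψ : ψ.re < 0) (hl : 0 < l) {t : ℝ} (ht : 0 < t) :
    Integrable (fun s => G ψ l (t, s)) (volume.restrict (Ioi 0)) := by
  have hq := (gauss_slice ht).const_mul (Real.exp (-l*t))
  apply Integrable.mono' hq
  · apply Continuous.aestronglyMeasurable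
    simp only [G]
    apply Continuous.mul continuous_const
    apply Continuous.mul
    · exact Complex.continuous_exp.comp ((Complex.continuous_ofReal).mul continuous_const)
    · apply Complex.continuous_ofReal.comp
      exact continuous_const.mul (((continuous_id.pow 2).neg).div_const _).rexp
  · filter_upwards [ae_restrict_mem measurableSet_Ioi] with s hs
    rw [G_norm ψ l ht hs]
    have h1 : Real.exp (s * ψ.re) ≤ 1 := by
      apply Real.exp_le_one_iff.2
      have : (0:ℝ) < s := hs
      nlinarith
    have hq0 : (0:ℝ) ≤ 2 / Real.sqrt (4 * π * t) * Real.exp (-s ^ 2 / (4 * t)) := by positivity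
    calc Real.exp (-l*t) * Real.exp (s*ψ.re) * (2 / Real.sqrt (4*π*t) * Real.exp (-s^2/(4*t)))
        ≤ Real.exp (-l*t) * 1 * (2 / Real.sqrt (4*π*t) * Real.exp (-s^2/(4*t))) := by
          apply mul_le_mul_of_nonneg_right _ hq0
          exact mul_le_mul_of_nonneg_left h1 (Real.exp_nonneg _)
      _ = Real.exp (-l*t) * (2 / Real.sqrt (4*π*t) * Real.exp (-s^2/(4*t))) := by ring
  
lemma G_integrable (hψ : ψ.re < 0) (hl : 0 < l) :
    Integrable (G ψ l) ((volume.restrict (Ioi 0)).prod (volume.restrict (Ioi (0:ℝ)))) := by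
  rw [integrable_prod_iff (G_aesm ψ l hl)]
  constructor
  · filter_upwards [ae_restrict_mem measurableSet_Ioi] with t ht
    exact G_slice_integrable ψ l hψ hl ht
  · apply Integrable.mono' (g := fun t : ℝ => Real.exp (-l*t))
      ((exp_neg_integrableOn_Ioi 0 hl))
    · exact ((G_aesm ψ l hl).norm.integral_prod_right')
    · filter_upwards [ae_restrict_mem measurableSet_Ioi] with t ht
      have h1 : ∫ s in Ioi (0:ℝ), ‖G ψ l (t, s)‖
          ≤ ∫ s in Ioi (0:ℝ), Real.exp (-l*t) * (2/Real.sqrt (4*π*t) * Real.exp (-s^2/(4*t))) := by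
        apply integral_mono_of_nonneg
        · filter_upwards with s; exact norm_nonneg _
        · exact (gauss_slice ht).const_mul _
        · filter_upwards [ae_restrict_mem measurableSet_Ioi] with s hs
          rw [G_norm ψ l ht hs]
          have h1 : Real.exp (s * ψ.re) ≤ 1 := by
            apply Real.exp_le_one_iff.2
            have : (0:ℝ) < s := hs
            nlinarith
          have hq0 : (0:ℝ) ≤ 2 / Real.sqrt (4 * π * t) * Real.exp (-s ^ 2 / (4 * t)) := by
            positivity
          have := mul_le_mul_of_nonneg_right
            (mul_le_mul_of_nonneg_left h1 (Real.exp_nonneg (-l*t))) hq0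
          calc Real.exp (-l*t) * Real.exp (s*ψ.re) * (2/Real.sqrt (4*π*t) * Real.exp (-s^2/(4*t)))
              ≤ Real.exp (-l*t) * 1 * (2/Real.sqrt (4*π*t) * Real.exp (-s^2/(4*t))) := this
            _ = Real.exp (-l*t) * (2/Real.sqrt (4*π*t) * Real.exp (-s^2/(4*t))) := by ring
      rw [Real.norm_eq_abs, abs_of_nonneg (integral_nonneg (fun s => norm_nonneg _))]
      calc ∫ s in Ioi (0:ℝ), ‖G ψ l (t, s)‖ ≤ _ := h1
        _ = Real.exp (-l*t) * ∫ s in Ioi (0:ℝ), 2/Real.sqrt (4*π*t) * Real.exp (-s^2/(4*t)) :=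
          integral_const_mul _ _
        _ = Real.exp (-l*t) := by rw [gauss_slice_integral ht, mul_one]

end main

theorem laplace_transform_subordinated_exponential (ψ : ℂ) (hψ : ψ.re < 0)
    (l : ℝ) (hl : 0 < l) :
    ∫ t in Ioi (0:ℝ), (Real.exp (-l * t) : ℂ) *
        (∫ s in Ioi (0:ℝ), Complex.exp ((s : ℂ) * ψ) *
          ((2 / Real.sqrt (4 * π * t) * Real.exp (-s ^ 2 / (4 * t)) : ℝ) : ℂ))
      = ((Real.sqrt l : ℂ))⁻¹ / ((Real.sqrt l : ℂ) - ψ) := by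
  have hsl : (0:ℝ) < Real.sqrt l := Real.sqrt_pos.2 hl
  have step1 : ∫ t in Ioi (0:ℝ), (Real.exp (-l * t) : ℂ) *
        (∫ s in Ioi (0:ℝ), Complex.exp ((s : ℂ) * ψ) *
          ((2 / Real.sqrt (4 * π * t) * Real.exp (-s ^ 2 / (4 * t)) : ℝ) : ℂ))
      = ∫ t in Ioi (0:ℝ), ∫ s in Ioi (0:ℝ), G ψ l (t, s) := by
    apply setIntegral_congr_fun measurableSet_Ioi
    intro t ht
    simp only [G]
    rw [← integral_const_mul]
  rw [step1]
  have hint : Integrable (Function.uncurry fun t s => G ψ l (t, s))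
      ((volume.restrict (Ioi 0)).prod (volume.restrict (Ioi (0:ℝ)))) :=
    G_integrable ψ l hψ hl
  rw [integral_integral_swap hint]
  have step2 : ∀ s ∈ Ioi (0:ℝ), ∫ t in Ioi (0:ℝ), G ψ l (t, s)
      = ((Real.sqrt l : ℂ))⁻¹ * Complex.exp (((ψ - Real.sqrt l)) * s) := by
    intro s hs
    have hs0 : (0:ℝ) < s := hs
    have hG : ∀ t : ℝ, G ψ l (t, s) = Complex.exp ((s : ℂ) * ψ) *
        ((Real.exp (-l*t) * (2 / Real.sqrt (4 * π * t) * Real.exp (-s ^ 2 / (4 * t))) : ℝ) : ℂ) := by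
      intro t
      simp only [G]
      push_cast
      ring
    simp_rw [hG]
    rw [integral_const_mul]
    rw [show (∫ a in Ioi (0:ℝ), ((Real.exp (-l*a)
          * (2 / Real.sqrt (4*π*a) * Real.exp (-s^2/(4*a))) : ℝ) : ℂ))
        = ((∫ a in Ioi (0:ℝ), Real.exp (-l*a)
          * (2 / Real.sqrt (4*π*a) * Real.exp (-s^2/(4*a))) : ℝ) : ℂ) from integral_ofReal]
    rw [heat_laplace hl hs0]
    rw [Complex.ofReal_div, Complex.ofReal_exp]
    rw [show ((ψ - (Real.sqrt l : ℂ)) * (s:ℂ)) = (s : ℂ)*ψ + ((-(s*Real.sqrt l) : ℝ) : ℂ) by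
      push_cast; ring]
    rw [Complex.exp_add]
    have h0 : ((Real.sqrt l : ℝ) : ℂ) ≠ 0 := by
      simp only [ne_eq, Complex.ofReal_eq_zero]
      positivity
    field_simp
  rw [setIntegral_congr_fun measurableSet_Ioi step2, integral_const_mul]
  have hre : ((ψ - (Real.sqrt l : ℂ))).re < 0 := by
    simp only [Complex.sub_re, Complex.ofReal_re]
    linarith
  rw [integral_cexp_Ioi hre]
  rw [show -(ψ - (Real.sqrt l:ℂ))⁻¹ = ((Real.sqrt l:ℂ) - ψ)⁻¹ by rw [← inv_neg, neg_sub]]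
  rw [div_eq_mul_inv]
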